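/- arXiv:2403.04214 — 3 statements merged into one kernel-verified Lean document; each statement's English description precedes it below -/
import Mathlib

section
/- Let U be a unitary operator on a separable complex Hilbert space H and let λ be an element of the discrete spectrum of U. Then for every ε > 0 and every nonnegative self-adjoint operator A on H such that the spectral projections E_A([0,R)) converge strongly to the identity as R → ∞ and E_U(X) is compact for any closed arc X of the unit circle disjoint from the essential spectrum, there exists R > 0 such that ‖Uf − λf‖ ≥ (d(λ) − ε)‖f‖ for all f ∈ H with E_A([0,R))f = 0, where d(λ) := dist(λ, σ_ess(U)). -/
open scoped InnerProductSpace

noncomputable section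

/-- A projection-valued measure on subsets of `α`, acting on a complex Hilbert space `H`. -/
structure PVM (α : Type*) (H : Type*) [NormedAddCommGroup H] [InnerProductSpace ℂ H]
    [CompleteSpace H] where
  proj : Set α → H →L[ℂ] H
  selfAdj : ∀ S, ContinuousLinearMap.adjoint (proj S) = proj S
  inter : ∀ S T, proj S ∘L proj T = proj (S ∩ T)
  empty : proj ∅ = 0
  univ : proj Set.univ = 1
  countablyAdditive : ∀ f : ℕ → Set α, (Pairwise fun m n => Disjoint (f m) (f n)) →
    ∀ ψ : H, HasSum (fun n => proj (f n) ψ) (proj (⋃ n, f n) ψ)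

/-- The discrete spectrum: isolated points of the spectrum which are eigenvalues of
finite multiplicity. -/
def discreteSpectrum {H : Type*} [NormedAddCommGroup H] [InnerProductSpace ℂ H]
    [CompleteSpace H] (T : H →L[ℂ] H) : Set ℂ :=
  {z | z ∈ spectrum ℂ T ∧ z ∉ closure (spectrum ℂ T \ {z}) ∧
    FiniteDimensional ℂ (LinearMap.ker ((T - z • (1 : H →L[ℂ] H) : H →L[ℂ] H) : H →ₗ[ℂ] H))}

/-- The essential spectrum: the spectrum minus the discrete spectrum. -/
def essentialSpectrum {H : Type*} [NormedAddCommGroup H] [InnerProductSpace ℂ H]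
    [CompleteSpace H] (T : H →L[ℂ] H) : Set ℂ :=
  spectrum ℂ T \ discreteSpectrum T

/-- `E` is the spectral measure of the (normal) operator `T`. -/
structure IsSpectralMeasureOf {H : Type*} [NormedAddCommGroup H] [InnerProductSpace ℂ H]
    [CompleteSpace H] (T : H →L[ℂ] H) (E : PVM ℂ H) : Prop where
  commute : ∀ S, Commute T (E.proj S)
  support : E.proj (spectrum ℂ T) = 1
  lower : ∀ (S : Set ℂ) (z : ℂ) (ψ : H), E.proj S ψ = ψ →
    Metric.infDist z S * ‖ψ‖ ≤ ‖T ψ - z • ψ‖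
  upper : ∀ (S : Set ℂ) (z : ℂ) (r : ℝ) (ψ : H), E.proj S ψ = ψ →
    S ⊆ Metric.closedBall z r → ‖T ψ - z • ψ‖ ≤ r * ‖ψ‖

/-- The closed arc `{z e^{ik} : -θ ≤ k ≤ θ}` of the circle through `z`. -/
def circleArc (z : ℂ) (θ : ℝ) : Set ℂ :=
  (fun k : ℝ => z * Complex.exp (Complex.I * k)) '' Set.Icc (-θ) θ

/-! Put `d = dist(λ, σ_ess(U))` and `c = d - ε/2`. The arc `X` of the unit circle within distance
`c` of `λ` misses the essential spectrum, so `E_U(X)` is compact, while `U - λ` is bounded below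
by `c` on the range of `E_U(σ(U) \ X)`; hence `‖(U - λ)f‖ ≥ c‖f‖ - (c + 2)‖E_U(X) f‖`.
Since `E_A([0,R)) → 1` strongly, unit vectors killed by `E_A([0,R))` tend weakly to zero as
`R → ∞`, and the compact `E_U(X)` maps them to norm-small vectors: `‖E_U(X) f‖ ≤ δ‖f‖` for `R`
large, which gives `(d - ε)‖f‖` for `δ = ε / (2(c + 2))`. -/

open Real in
lemma abs_sin_half_eq_sin_abs_half {k : ℝ} (hk : |k| ≤ π) : |sin (k / 2)| = sin (|k| / 2) := by
  obtain ⟨hk₁, hk₂⟩ := abs_le.1 hk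
  rw [show |k| / 2 = |k / 2| by rw [abs_div, abs_two]]
  rcases abs_cases (k / 2) with ⟨h, h0⟩ | ⟨h, h0⟩ <;> rw [h]
  · exact abs_of_nonneg (sin_nonneg_of_nonneg_of_le_pi h0 (by linarith [pi_pos]))
  · rw [sin_neg]
    exact abs_of_nonpos (sin_nonpos_of_nonpos_of_neg_pi_le h0.le (by linarith [pi_pos]))

lemma dist_self_mul_exp_I_mul {z : ℂ} (hz : ‖z‖ = 1) (k : ℝ) :
    dist z (z * Complex.exp (Complex.I * k)) = 2 * |Real.sin (k / 2)| := by
  rw [dist_comm, dist_eq_norm, ← mul_sub_one, norm_mul, hz, one_mul,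
    Complex.norm_exp_I_mul_ofReal_sub_one, norm_mul, Real.norm_two, Real.norm_eq_abs]

open Real in
lemma abs_le_two_mul_arcsin_iff {z : ℂ} (hz : ‖z‖ = 1) {k : ℝ} (hk : |k| ≤ π) (c : ℝ) :
    |k| ≤ 2 * arcsin (c / 2) ↔ dist z (z * Complex.exp (Complex.I * k)) ≤ c := by
  rw [dist_self_mul_exp_I_mul hz, abs_sin_half_eq_sin_abs_half hk, ← le_div_iff₀' two_pos,
    ← div_le_iff₀' two_pos]
  exact le_arcsin_iff_sin_le' ⟨by linarith [abs_nonneg k, pi_pos], by linarith⟩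

open Real in
lemma mem_circleArc_two_mul_arcsin_iff {z w : ℂ} (hz : ‖z‖ = 1) (hw : ‖w‖ = 1) (c : ℝ) :
    w ∈ circleArc z (2 * arcsin (c / 2)) ↔ dist z w ≤ c := by
  constructor
  · rintro ⟨k, hk, rfl⟩
    have hkθ : |k| ≤ 2 * arcsin (c / 2) := abs_le.2 hk
    have hkπ : |k| ≤ π := hkθ.trans (by linarith [arcsin_le_pi_div_two (c / 2)])
    exact (abs_le_two_mul_arcsin_iff hz hkπ c).1 hkθ
  · intro hc
    have hzw : z * Complex.exp (Complex.I * (w / z).arg) = w := by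
      have h := Complex.norm_mul_exp_arg_mul_I (w / z)
      rw [norm_div, hz, hw, div_one, Complex.ofReal_one, one_mul, mul_comm] at h
      rw [h, mul_div_cancel₀ _ (norm_ne_zero_iff.1 (hz ▸ one_ne_zero))]
    rw [← hzw] at hc ⊢
    exact ⟨_, abs_le.1 ((abs_le_two_mul_arcsin_iff hz (Complex.abs_arg_le_pi _) c).2 hc), rfl⟩

namespace PVM

variable {α H : Type*} [NormedAddCommGroup H] [InnerProductSpace ℂ H] [CompleteSpace H]
  (E : PVM α H)

lemma proj_proj_apply (S : Set α) (ψ : H) : E.proj S (E.proj S ψ) = E.proj S ψ := by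
  simpa using congr($(E.inter S S) ψ)

lemma proj_inter_apply (S T : Set α) (ψ : H) : E.proj S (E.proj T ψ) = E.proj (S ∩ T) ψ :=
  congr($(E.inter S T) ψ)

lemma proj_union_apply {S T : Set α} (h : Disjoint S T) (ψ : H) :
    E.proj (S ∪ T) ψ = E.proj S ψ + E.proj T ψ := by
  let f : ℕ → Set α := fun n => if n = 0 then S else if n = 1 then T else ∅
  have hf : Pairwise fun m n => Disjoint (f m) (f n) := by
    intro m n hmn
    simp only [f]
    split_ifs <;> first | omega | simp [h.symm]
  have hunion : ⋃ n, f n = S ∪ T := by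
    ext x
    simp only [Set.mem_iUnion, Set.mem_union, f]
    refine ⟨fun ⟨n, hn⟩ => ?_, ?_⟩
    · split_ifs at hn <;> simp_all
    · rintro (hx | hx)
      exacts [⟨0, by simpa⟩, ⟨1, by simpa⟩]
  have hsum : HasSum (fun n => E.proj (f n) ψ) (∑ n ∈ Finset.range 2, E.proj (f n) ψ) :=
    hasSum_sum_of_ne_finset_zero fun n hn => by
      simp only [Finset.mem_range, not_lt] at hn
      simp [f, show n ≠ 0 by omega, show n ≠ 1 by omega, E.empty]
  rw [← hunion, (E.countablyAdditive f hf ψ).unique hsum]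
  simp [Finset.sum_range_succ, f]

end PVM

namespace IsSpectralMeasureOf

variable {H : Type*} [NormedAddCommGroup H] [InnerProductSpace ℂ H] [CompleteSpace H]
  {T : H →L[ℂ] H} {E : PVM ℂ H}

lemma proj_add_proj_spectrum_diff (hE : IsSpectralMeasureOf T E) (X : Set ℂ) (ψ : H) :
    E.proj X ψ + E.proj (spectrum ℂ T \ X) ψ = ψ := by
  have h := E.proj_union_apply (Set.disjoint_sdiff_inter (s := spectrum ℂ T) (t := X)).symm ψ
  rw [Set.inter_union_sdiff, hE.support, ← E.proj_inter_apply, hE.support] at h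
  simpa using h.symm

lemma norm_sub_smul_le (hE : IsSpectralMeasureOf T E) {z : ℂ} {r : ℝ}
    (hr : spectrum ℂ T ⊆ Metric.closedBall z r) (ψ : H) : ‖T ψ - z • ψ‖ ≤ r * ‖ψ‖ :=
  hE.upper _ z r ψ (by simp [hE.support]) hr

lemma mul_norm_proj_le_norm_sub_smul (hE : IsSpectralMeasureOf T E) {S : Set ℂ} {z : ℂ} {c : ℝ}
    (hc : ∀ μ ∈ S, c ≤ dist z μ) (ψ : H) :
    c * ‖E.proj S ψ‖ ≤ ‖T (E.proj S ψ) - z • E.proj S ψ‖ := by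
  rcases S.eq_empty_or_nonempty with rfl | hS
  · simp [E.empty]
  refine le_trans ?_ (hE.lower S z _ (E.proj_proj_apply S ψ))
  gcongr
  exact (Metric.le_infDist hS).2 hc

lemma sub_mul_norm_proj_le_norm_sub_smul (hE : IsSpectralMeasureOf T E) {X : Set ℂ} {z : ℂ}
    {c r : ℝ} (hc0 : 0 ≤ c) (hc : ∀ μ ∈ spectrum ℂ T \ X, c ≤ dist z μ)
    (hr : spectrum ℂ T ⊆ Metric.closedBall z r) (ψ : H) :
    c * ‖ψ‖ - (c + r) * ‖E.proj X ψ‖ ≤ ‖T ψ - z • ψ‖ := by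
  set φ := E.proj X ψ
  set χ := E.proj (spectrum ℂ T \ X) ψ
  have hψ : φ + χ = ψ := hE.proj_add_proj_spectrum_diff X ψ
  have hχ : ‖ψ‖ - ‖φ‖ ≤ ‖χ‖ := by
    rw [← hψ]; simpa using norm_sub_norm_le (φ + χ) φ
  have hsplit : T χ - z • χ = (T ψ - z • ψ) - (T φ - z • φ) := by
    rw [← hψ, map_add, smul_add]; abel
  have hlow := hE.mul_norm_proj_le_norm_sub_smul hc ψ
  have hup := hE.norm_sub_smul_le hr φ
  have htri := hsplit ▸ norm_sub_le (T ψ - z • ψ) (T φ - z • φ)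
  linarith [mul_le_mul_of_nonneg_left hχ hc0]

end IsSpectralMeasureOf

open Filter Topology

namespace IsCompactOperator

variable {𝕜 H K : Type*} [RCLike 𝕜] [NormedAddCommGroup H] [InnerProductSpace 𝕜 H]
  [CompleteSpace H] [NormedAddCommGroup K] [InnerProductSpace 𝕜 K] [CompleteSpace K]
  {P : H →L[𝕜] K}

lemma tendsto_zero_of_weakly_tendsto_zero (hP : IsCompactOperator P) {u : ℕ → H} {C : ℝ}
    (hb : ∀ n, ‖u n‖ ≤ C) (hw : ∀ g, Tendsto (fun n => ⟪g, u n⟫_𝕜) atTop (𝓝 0)) :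
    Tendsto (fun n => P (u n)) atTop (𝓝 0) := by
  refine tendsto_of_subseq_tendsto fun ns hns => ?_
  have hK := hP.isCompact_closure_image_closedBall C
  obtain ⟨a, -, φ, hφ, ha⟩ := hK.tendsto_subseq fun n =>
    subset_closure ⟨u (ns n), mem_closedBall_zero_iff.2 (hb _), rfl⟩
  suffices a = 0 from ⟨φ, this ▸ ha⟩
  have h₁ : Tendsto (fun n => ⟪a, P (u (ns (φ n)))⟫_𝕜) atTop (𝓝 ⟪a, a⟫_𝕜) :=
    tendsto_const_nhds.inner ha
  have h₂ : Tendsto (fun n => ⟪a, P (u (ns (φ n)))⟫_𝕜) atTop (𝓝 0) := by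
    simp_rw [← ContinuousLinearMap.adjoint_inner_left]
    exact (hw _).comp (hns.comp hφ.tendsto_atTop)
  exact inner_self_eq_zero.1 (tendsto_nhds_unique h₁ h₂)

lemma eventually_norm_apply_le {ι : Type*} {l : Filter ι} [l.IsCountablyGenerated]
    (hP : IsCompactOperator P) {F : ι → H →L[𝕜] H}
    (hFadj : ∀ i, ContinuousLinearMap.adjoint (F i) = F i)
    (hF : ∀ ψ, Tendsto (fun i => F i ψ) l (𝓝 ψ)) {δ : ℝ} (hδ : 0 < δ) :
    ∀ᶠ i in l, ∀ f, F i f = 0 → ‖P f‖ ≤ δ * ‖f‖ := by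
  by_contra h
  obtain ⟨ns, hns, hbad⟩ := exists_seq_forall_of_frequently (not_eventually.1 h)
  push Not at hbad
  choose f hf hlt using hbad
  have hf0 n : f n ≠ 0 := by rintro h0; simpa [h0] using hlt n
  set u := fun n => (‖f n‖⁻¹ : 𝕜) • f n
  have hu n : ‖u n‖ = 1 := norm_smul_inv_norm (hf0 n)
  have hweak g : Tendsto (fun n => ⟪g, u n⟫_𝕜) atTop (𝓝 0) := by
    have hinner n : ⟪g, u n⟫_𝕜 = ⟪g - F (ns n) g, u n⟫_𝕜 := by
      rw [inner_sub_left, ← ContinuousLinearMap.adjoint_inner_right, hFadj]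
      simp [u, hf]
    refine squeeze_zero_norm (fun n => ?_) (tendsto_iff_norm_sub_tendsto_zero.1 ((hF g).comp hns))
    rw [hinner, Function.comp_apply, norm_sub_rev]
    simpa [hu] using norm_inner_le_norm (𝕜 := 𝕜) (g - F (ns n) g) (u n)
  have hPu := hP.tendsto_zero_of_weakly_tendsto_zero (fun n => (hu n).le) hweak
  obtain ⟨n, hn⟩ := (hPu.norm.eventually (gt_mem_nhds (by simpa using hδ))).exists
  have hPf : ‖P (f n)‖ = ‖f n‖ * ‖P (u n)‖ := by
    simp [u, norm_smul, hf0 n]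
  have hfpos : 0 < ‖f n‖ := norm_pos_iff.2 (hf0 n)
  nlinarith [hlt n]

end IsCompactOperator

theorem stmt0_general {H : Type*} [NormedAddCommGroup H] [InnerProductSpace ℂ H] [CompleteSpace H]
    (U : H →L[ℂ] H) (hU : U ∈ unitary (H →L[ℂ] H))
    (lam : ℂ) (hlam : lam ∈ discreteSpectrum U)
    (ε : ℝ) (hε : 0 < ε)
    (EA : PVM ℝ H)
    (hconv : ∀ ψ : H, Filter.Tendsto (fun R : ℝ => EA.proj (Set.Ico 0 R) ψ)
      Filter.atTop (nhds ψ))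
    (EU : PVM ℂ H) (hEU : IsSpectralMeasureOf U EU)
    (hcompact : ∀ (z : ℂ) (θ : ℝ), ‖z‖ = 1 →
      Disjoint (circleArc z θ) (essentialSpectrum U) →
      IsCompactOperator (EU.proj (circleArc z θ))) :
    ∃ R > (0 : ℝ), ∀ f : H, EA.proj (Set.Ico 0 R) f = 0 →
      (Metric.infDist lam (essentialSpectrum U) - ε) * ‖f‖ ≤ ‖U f - lam • f‖ := by
  set d := Metric.infDist lam (essentialSpectrum U)
  obtain hdε | hεd := le_or_gt d ε
  · exact ⟨1, one_pos, fun f _ =>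
      (mul_nonpos_of_nonpos_of_nonneg (by linarith) (norm_nonneg f)).trans (norm_nonneg _)⟩
  have hσ : ∀ μ ∈ spectrum ℂ U, ‖μ‖ = 1 := spectrum.norm_eq_one_of_unitary hU
  have hlam1 : ‖lam‖ = 1 := hσ lam hlam.1
  set c := d - ε / 2 with hc
  set X := circleArc lam (2 * Real.arcsin (c / 2))
  have hX : ∀ μ ∈ spectrum ℂ U, μ ∈ X ↔ dist lam μ ≤ c := fun μ hμ =>
    mem_circleArc_two_mul_arcsin_iff hlam1 (hσ μ hμ) c
  have hXess : Disjoint X (essentialSpectrum U) := Set.disjoint_left.2 fun μ hμX hμess => by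
    have : d ≤ dist lam μ := Metric.infDist_le_dist_of_mem hμess
    linarith [(hX μ hμess.1).1 hμX]
  have hc2 : 0 < c + 2 := by linarith
  have hδ : 0 < ε / (2 * (c + 2)) := by positivity
  have hsmall := IsCompactOperator.eventually_norm_apply_le (hcompact lam _ hlam1 hXess)
    (fun R => EA.selfAdj _) hconv hδ
  obtain ⟨R, hR, hR0⟩ := (hsmall.and (eventually_gt_atTop 0)).exists
  refine ⟨R, hR0, fun f hf => ?_⟩
  have hbelow := hEU.sub_mul_norm_proj_le_norm_sub_smul (X := X) (z := lam) (r := 2)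
    (by linarith) (fun μ hμ => (not_le.1 ((hX μ hμ.1).not.1 hμ.2)).le)
    (fun μ hμ => Metric.mem_closedBall'.2 <|
      (dist_le_norm_add_norm lam μ).trans_eq (by rw [hlam1, hσ μ hμ]; norm_num)) f
  calc (d - ε) * ‖f‖ = c * ‖f‖ - (c + 2) * (ε / (2 * (c + 2)) * ‖f‖) := by
        field_simp
        ring
    _ ≤ c * ‖f‖ - (c + 2) * ‖EU.proj X f‖ := by gcongr; exact hR f hf
    _ ≤ ‖U f - lam • f‖ := hbelow

/-- lower bound `‖Uf - λf‖ ≥ (d(λ) - ε)‖f‖` for vectors spectrally supported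
in `[R, ∞)` with respect to `A`. -/
theorem stmt0 {H : Type*} [NormedAddCommGroup H] [InnerProductSpace ℂ H] [CompleteSpace H]
    [TopologicalSpace.SeparableSpace H]
    (U : H →L[ℂ] H) (hU : U ∈ unitary (H →L[ℂ] H))
    (lam : ℂ) (hlam : lam ∈ discreteSpectrum U)
    (ε : ℝ) (hε : 0 < ε)
    (EA : PVM ℝ H) (hApos : EA.proj (Set.Iio 0) = 0)
    (hconv : ∀ ψ : H, Filter.Tendsto (fun R : ℝ => EA.proj (Set.Ico 0 R) ψ)
      Filter.atTop (nhds ψ))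
    (EU : PVM ℂ H) (hEU : IsSpectralMeasureOf U EU)
    (hcompact : ∀ (z : ℂ) (θ : ℝ), ‖z‖ = 1 →
      Disjoint (circleArc z θ) (essentialSpectrum U) →
      IsCompactOperator (EU.proj (circleArc z θ))) :
    ∃ R > (0 : ℝ), ∀ f : H, EA.proj (Set.Ico 0 R) f = 0 →
      (Metric.infDist lam (essentialSpectrum U) - ε) * ‖f‖ ≤ ‖U f - lam • f‖ :=
  stmt0_general U hU lam hlam ε hε EA hconv EU hEU hcompact
end
end

section
/- Let U be a unitary operator on a Hilbert space H that finitely propagates with constant b > 0 with respect to a nonnegative self-adjoint operator A, meaning that for all R₁ < R₂ and ψ ∈ Ran E_A([R₁,R₂)), one has Uψ ∈ Ran E_A([R₁−b, R₂+b)). Then for any R > 0, the commutator [U, E_A([R,∞))] satisfies [U, E_A([R,∞))] = −E_A([R,R+b)) U E_A([R−b,R)) + E_A([R−b,R)) U E_A([R,R+b)), where E_A([R−b,R)) is interpreted as E_A([0,R)) when R − b ≤ 0. -/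
noncomputable section

/-- `U` finitely propagates with constant `b` with respect to the spectral measure `E`:
it maps the spectral subspace of `[R₁, R₂)` into that of `[R₁ - b, R₂ + b)`. -/
def FinitePropagation {H : Type*} [NormedAddCommGroup H] [InnerProductSpace ℂ H]
    [CompleteSpace H] (U : H →L[ℂ] H) (E : PVM ℝ H) (b : ℝ) : Prop :=
  ∀ R₁ R₂ : ℝ, R₁ < R₂ → ∀ ψ : H, E.proj (Set.Ico R₁ R₂) ψ = ψ →
    E.proj (Set.Ico (R₁ - b) (R₂ + b)) (U ψ) = U ψ

/-! Write `P = E[R, ∞)` and `Q = E(-∞, R) = 1 - P`; then `[U, P] = QUP - PUQ`. Finite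
propagation makes `E(T) U E(S)` vanish whenever `T` stays at distance `b` from an interval `S`,
and countable additivity over unit intervals extends this to half-lines `S`. Splitting
`P = E[R, R + b) + E[R + b, ∞)` and `Q = E(-∞, R - b) + E[R - b, R)` therefore leaves a single
block in each of `QUP` and `PUQ`; positivity of `E` finally replaces `[R - b, R)` by
`[max (R - b) 0, R)`. -/

open Function

namespace PVM

section General

variable {α H : Type*} [NormedAddCommGroup H] [InnerProductSpace ℂ H] [CompleteSpace H]
  (E : PVM α H)

theorem proj_union {S T : Set α} (h : Disjoint S T) :
    E.proj (S ∪ T) = E.proj S + E.proj T := by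
  classical
  let f : ℕ → Set α := fun n => if n = 0 then S else if n = 1 then T else ∅
  have hf : Pairwise (Disjoint on f) := by
    intro m n hmn
    rcases m with _ | _ | m <;> rcases n with _ | _ | n <;> simp_all [f, onFun, h.symm]
  have hunion : ⋃ n, f n = S ∪ T := by
    ext x
    simp only [Set.mem_iUnion, Set.mem_union, f]
    constructor
    · rintro ⟨_ | _ | n, hx⟩ <;> simp_all
    · rintro (hx | hx)
      exacts [⟨0, by simpa⟩, ⟨1, by simpa⟩]
  ext ψ
  have hsum : HasSum (fun n => E.proj (f n) ψ) (E.proj S ψ + E.proj T ψ) := by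
    convert hasSum_sum_of_ne_finset_zero (L := SummationFilter.unconditional ℕ) (s := {0, 1})
      (f := fun n => E.proj (f n) ψ) _
    · simp [f]
    · intro n hn
      simp_all [f, E.empty]
  simpa [hunion] using (E.countablyAdditive f hf ψ).unique hsum

theorem proj_add_proj_compl (S : Set α) : E.proj S + E.proj Sᶜ = 1 := by
  rw [← E.proj_union disjoint_compl_right, Set.union_compl_self, E.univ]

theorem comp_proj_iUnion_eq_zero {F : Type*} [NormedAddCommGroup F] [NormedSpace ℂ F]
    (L : H →L[ℂ] F) {f : ℕ → Set α} (hf : Pairwise (Disjoint on f))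
    (h : ∀ n, L ∘L E.proj (f n) = 0) : L ∘L E.proj (⋃ n, f n) = 0 := by
  ext ψ
  have hsum := (E.countablyAdditive f hf ψ).mapL L
  simp only [← ContinuousLinearMap.comp_apply, h, zero_apply] at hsum
  exact hsum.unique hasSum_zero

end General

variable {H : Type*} [NormedAddCommGroup H] [InnerProductSpace ℂ H] [CompleteSpace H]
  (E : PVM ℝ H)

theorem proj_inter_Ici_zero (hpos : E.proj (Set.Iio 0) = 0) (S : Set ℝ) :
    E.proj (S ∩ Set.Ici 0) = E.proj S := by
  have hsplit : E.proj S = E.proj (S ∩ Set.Ici 0) + E.proj (S ∩ Set.Iio 0) := by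
    rw [← E.proj_union, ← Set.inter_union_distrib_left, Set.Ici_union_Iio, Set.inter_univ]
    exact (Set.Ici_disjoint_Iio le_rfl).mono Set.inter_subset_right Set.inter_subset_right
  rw [hsplit, ← E.inter S (Set.Iio 0), hpos, ContinuousLinearMap.comp_zero, add_zero]

theorem comp_proj_Ici_eq_zero {F : Type*} [NormedAddCommGroup F] [NormedSpace ℂ F]
    (L : H →L[ℂ] F) (a : ℝ) (h : ∀ c d, a ≤ c → L ∘L E.proj (Set.Ico c d) = 0) :
    L ∘L E.proj (Set.Ici a) = 0 := by
  have hdisj := Monotone.pairwise_disjoint_on_Ico_succ (f := fun n : ℕ => a + n)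
    fun m n hmn => by dsimp only; gcongr
  have hunion : ⋃ n : ℕ, Set.Ico (a + n) (a + ↑(Order.succ n)) = Set.Ici a := by
    ext x
    simp only [Set.mem_iUnion, Set.mem_Ico, Set.mem_Ici, Order.succ_eq_add_one, Nat.cast_add_one]
    constructor
    · rintro ⟨n, hn, -⟩
      linarith [n.cast_nonneg (α := ℝ)]
    · intro hx
      refine ⟨⌊x - a⌋₊, ?_, ?_⟩
      · linarith [Nat.floor_le (sub_nonneg.2 hx)]
      · linarith [Nat.lt_floor_add_one (x - a)]
  rw [← hunion]
  exact E.comp_proj_iUnion_eq_zero L hdisj fun n => h _ _ (by simp)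

theorem comp_proj_Iio_eq_zero {F : Type*} [NormedAddCommGroup F] [NormedSpace ℂ F]
    (L : H →L[ℂ] F) (a : ℝ) (h : ∀ c d, d ≤ a → L ∘L E.proj (Set.Ico c d) = 0) :
    L ∘L E.proj (Set.Iio a) = 0 := by
  have hdisj := Antitone.pairwise_disjoint_on_Ico_succ (f := fun n : ℕ => a - n)
    fun m n hmn => by dsimp only; gcongr
  have hunion : ⋃ n : ℕ, Set.Ico (a - ↑(Order.succ n)) (a - n) = Set.Iio a := by
    ext x
    simp only [Set.mem_iUnion, Set.mem_Ico, Set.mem_Iio, Order.succ_eq_add_one, Nat.cast_add_one]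
    constructor
    · rintro ⟨n, -, hn⟩
      linarith [n.cast_nonneg (α := ℝ)]
    · intro hx
      obtain ⟨n, hn⟩ := Nat.exists_eq_add_one_of_ne_zero (Nat.ceil_pos.2 (sub_pos.2 hx)).ne'
      have hle := Nat.le_ceil (a - x)
      have hlt := Nat.ceil_lt_add_one (sub_nonneg.2 hx.le)
      rw [hn, Nat.cast_add_one] at hle hlt
      exact ⟨n, by linarith, by linarith⟩
  rw [← hunion]
  exact E.comp_proj_iUnion_eq_zero L hdisj fun n => h _ _ (by simp)

end PVM

namespace FinitePropagation

variable {H : Type*} [NormedAddCommGroup H] [InnerProductSpace ℂ H] [CompleteSpace H]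
  {U : H →L[ℂ] H} {E : PVM ℝ H} {b : ℝ}

theorem proj_comp_comp_proj_Ico_eq_zero (hprop : FinitePropagation U E b) {T : Set ℝ}
    {c d : ℝ} (h : Disjoint T (Set.Ico (c - b) (d + b))) :
    E.proj T ∘L U ∘L E.proj (Set.Ico c d) = 0 := by
  rcases lt_or_ge c d with hcd | hdc
  · ext ψ
    have hfix : E.proj (Set.Ico c d) (E.proj (Set.Ico c d) ψ) = E.proj (Set.Ico c d) ψ := by
      rw [← ContinuousLinearMap.comp_apply, E.inter, Set.inter_self]
    simp only [ContinuousLinearMap.comp_apply, zero_apply]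
    rw [← hprop c d hcd _ hfix, ← ContinuousLinearMap.comp_apply, E.inter, h.inter_eq, E.empty,
      zero_apply]
  · rw [Set.Ico_eq_empty hdc.not_gt, E.empty, ContinuousLinearMap.comp_zero,
      ContinuousLinearMap.comp_zero]

theorem proj_comp_comp_proj_Ici_eq_zero (hprop : FinitePropagation U E b) {T : Set ℝ} {a : ℝ}
    (h : Disjoint T (Set.Ici (a - b))) : E.proj T ∘L U ∘L E.proj (Set.Ici a) = 0 := by
  rw [← ContinuousLinearMap.comp_assoc]
  refine E.comp_proj_Ici_eq_zero _ a fun c d hc => ?_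
  rw [ContinuousLinearMap.comp_assoc]
  exact hprop.proj_comp_comp_proj_Ico_eq_zero
    (h.mono_right fun x hx => le_trans (by linarith) hx.1)

theorem proj_comp_comp_proj_Iio_eq_zero (hprop : FinitePropagation U E b) {T : Set ℝ} {a : ℝ}
    (h : Disjoint T (Set.Iio (a + b))) : E.proj T ∘L U ∘L E.proj (Set.Iio a) = 0 := by
  rw [← ContinuousLinearMap.comp_assoc]
  refine E.comp_proj_Iio_eq_zero _ a fun c d hd => ?_
  rw [ContinuousLinearMap.comp_assoc]
  exact hprop.proj_comp_comp_proj_Ico_eq_zero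
    (h.mono_right fun x hx => lt_of_lt_of_le hx.2 (by linarith))

end FinitePropagation

theorem stmt1_general {H : Type*} [NormedAddCommGroup H] [InnerProductSpace ℂ H] [CompleteSpace H]
    (U : H →L[ℂ] H)
    (E : PVM ℝ H) (hpos : E.proj (Set.Iio 0) = 0)
    (b : ℝ) (hb : 0 < b) (hprop : FinitePropagation U E b)
    (R : ℝ) :
    U ∘L E.proj (Set.Ici R) - E.proj (Set.Ici R) ∘L U =
      - (E.proj (Set.Ico R (R + b)) ∘L U ∘L E.proj (Set.Ico (max (R - b) 0) R))
        + E.proj (Set.Ico (max (R - b) 0) R) ∘L U ∘L E.proj (Set.Ico R (R + b)) := by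
  set P := E.proj (Set.Ici R)
  set Q := E.proj (Set.Iio R)
  set m := max (R - b) 0
  have hQP : Q + P = 1 := by simpa using E.proj_add_proj_compl (Set.Iio R)
  have hP : P = E.proj (Set.Ico R (R + b)) + E.proj (Set.Ici (R + b)) := by
    rw [← E.proj_union ((Set.Iio_disjoint_Ici le_rfl).mono_left Set.Ico_subset_Iio_self),
      Set.Ico_union_Ici_eq_Ici (by linarith)]
  have hQ : Q = E.proj (Set.Iio (R - b)) + E.proj (Set.Ico m R) := by
    rw [← Set.Ico_inter_Ici, E.proj_inter_Ici_zero hpos,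
      ← E.proj_union ((Set.Iio_disjoint_Ici le_rfl).mono_right Set.Ico_subset_Ici_self),
      Set.Iio_union_Ico_eq_Iio (by linarith)]
  have hcomm : U ∘L P - P ∘L U = Q ∘L U ∘L P - P ∘L U ∘L Q := by
    simp only [← ContinuousLinearMap.mul_def]
    calc U * P - P * U = (Q + P) * U * P - P * U * (Q + P) := by rw [hQP, one_mul, mul_one]
      _ = Q * (U * P) - P * (U * Q) := by noncomm_ring
  have hQ_tail : Q ∘L U ∘L E.proj (Set.Ici (R + b)) = 0 :=
    hprop.proj_comp_comp_proj_Ici_eq_zero (Set.Iio_disjoint_Ici (by linarith))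
  have hP_tail : P ∘L U ∘L E.proj (Set.Iio (R - b)) = 0 :=
    hprop.proj_comp_comp_proj_Iio_eq_zero (Set.Ici_disjoint_Iio (by linarith))
  have hfar_below : E.proj (Set.Iio (R - b)) ∘L U ∘L E.proj (Set.Ico R (R + b)) = 0 :=
    hprop.proj_comp_comp_proj_Ico_eq_zero
      ((Set.Iio_disjoint_Ici le_rfl).mono_right Set.Ico_subset_Ici_self)
  have hfar_above : E.proj (Set.Ici (R + b)) ∘L U ∘L E.proj (Set.Ico m R) = 0 :=
    hprop.proj_comp_comp_proj_Ico_eq_zero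
      ((Set.Ici_disjoint_Iio le_rfl).mono_right Set.Ico_subset_Iio_self)
  have hQUP : Q ∘L U ∘L P = E.proj (Set.Ico m R) ∘L U ∘L E.proj (Set.Ico R (R + b)) := by
    rw [hP, ContinuousLinearMap.comp_add, ContinuousLinearMap.comp_add, hQ_tail, add_zero, hQ,
      ContinuousLinearMap.add_comp, hfar_below, zero_add]
  have hPUQ : P ∘L U ∘L Q = E.proj (Set.Ico R (R + b)) ∘L U ∘L E.proj (Set.Ico m R) := by
    rw [hQ, ContinuousLinearMap.comp_add, ContinuousLinearMap.comp_add, hP_tail, zero_add, hP,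
      ContinuousLinearMap.add_comp, hfar_above, add_zero]
  rw [hcomm, hQUP, hPUQ]
  abel

/-- commutator decomposition
`[U, E_A([R,∞))] = -E_A([R,R+b)) U E_A([R-b,R)) + E_A([R-b,R)) U E_A([R,R+b))`,
where `E_A([R-b,R))` is interpreted as `E_A([0,R))` when `R - b ≤ 0`. -/
theorem stmt1 {H : Type*} [NormedAddCommGroup H] [InnerProductSpace ℂ H] [CompleteSpace H]
    (U : H →L[ℂ] H) (hU : U ∈ unitary (H →L[ℂ] H))
    (E : PVM ℝ H) (hpos : E.proj (Set.Iio 0) = 0)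
    (b : ℝ) (hb : 0 < b) (hprop : FinitePropagation U E b)
    (R : ℝ) (hR : 0 < R) :
    U ∘L E.proj (Set.Ici R) - E.proj (Set.Ici R) ∘L U =
      - (E.proj (Set.Ico R (R + b)) ∘L U ∘L E.proj (Set.Ico (max (R - b) 0) R))
        + E.proj (Set.Ico (max (R - b) 0) R) ∘L U ∘L E.proj (Set.Ico R (R + b)) :=
  stmt1_general U E hpos b hb hprop R
end
end

section
/- Let U be a unitary operator finitely propagating with constant b > 0 with respect to a nonnegative self-adjoint operator A, and let δ > 0, N ∈ ℕ. Define the bounded step function Λ_N(r) := Σ_{n=1}^N δnb·1_{[(n−1)b,nb)}(r) for r ∈ [0, Nb) and Λ_N(r) := δNb for r ≥ Nb. Then the bounded operator [U, e^{Λ_N(A)}] e^{−Λ_N(A)} has operator norm at most 2 sinh(δb), uniformly in N. -/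
noncomputable section

/-- The truncated step operator `e^{Λ_N(A)} = Σ_{n=1}^N e^{δnb} E_A(B_n) + e^{δNb} E_A([Nb,∞))`,
where `B_n = [(n-1)b, nb)`. For `c = δ` this is `e^{Λ_N(A)}`, for `c = -δ` it is `e^{-Λ_N(A)}`. -/
def expLamN {H : Type*} [NormedAddCommGroup H] [InnerProductSpace ℂ H] [CompleteSpace H]
    (E : PVM ℝ H) (c b : ℝ) (N : ℕ) : H →L[ℂ] H :=
  (∑ n ∈ Finset.Icc 1 N,
      Real.exp (c * n * b) • E.proj (Set.Ico (((n : ℝ) - 1) * b) ((n : ℝ) * b)))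
    + Real.exp (c * N * b) • E.proj (Set.Ici ((N : ℝ) * b))

/-- `⌈x⌉_b := b ⋅ min {n ∈ ℕ : x ≤ n b}`. -/
def bceil (b x : ℝ) : ℝ := b * (⌈x / b⌉₊ : ℝ)

section Aux

local notation "⟪" x ", " y "⟫" => @inner ℂ _ _ x y

variable {H : Type*} [NormedAddCommGroup H] [InnerProductSpace ℂ H] [CompleteSpace H]
variable (E : PVM ℝ H)

lemma PVM.comp_apply (S T : Set ℝ) (ψ : H) :
    E.proj S (E.proj T ψ) = E.proj (S ∩ T) ψ := by
  conv_rhs => rw [← E.inter]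
  rfl

lemma PVM.disj (S T : Set ℝ) (h : Disjoint S T) (ψ : H) :
    E.proj S (E.proj T ψ) = 0 := by
  rw [E.comp_apply, Set.disjoint_iff_inter_eq_empty.mp h, E.empty]; rfl

lemma PVM.idem (S : Set ℝ) (ψ : H) : E.proj S (E.proj S ψ) = E.proj S ψ := by
  rw [E.comp_apply, Set.inter_self]

lemma PVM.inner_left (S : Set ℝ) (x y : H) : ⟪E.proj S x, y⟫ = ⟪x, E.proj S y⟫ := by
  conv_lhs => rw [← E.selfAdj S]
  exact ContinuousLinearMap.adjoint_inner_left _ _ _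

lemma PVM.norm_le (S : Set ℝ) (ψ : H) : ‖E.proj S ψ‖ ≤ ‖ψ‖ := by
  by_cases h : ‖E.proj S ψ‖ = 0
  · rw [h]; positivity
  have h1 : (‖E.proj S ψ‖ : ℝ) ^ 2 = RCLike.re ⟪E.proj S ψ, E.proj S ψ⟫ := by
    rw [inner_self_eq_norm_sq]
  rw [E.inner_left, E.idem] at h1
  have h2 : RCLike.re ⟪ψ, E.proj S ψ⟫ ≤ ‖ψ‖ * ‖E.proj S ψ‖ := re_inner_le_norm _ _
  nlinarith [norm_nonneg (E.proj S ψ), norm_nonneg ψ]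

lemma PVM.add (S T : Set ℝ) (h : Disjoint S T) (ψ : H) :
    E.proj (S ∪ T) ψ = E.proj S ψ + E.proj T ψ := by
  classical
  set f : ℕ → Set ℝ := fun n => if n = 0 then S else if n = 1 then T else ∅ with hf
  have hpair : Pairwise fun m n => Disjoint (f m) (f n) := by
    intro m n hmn
    simp only [hf]
    split_ifs <;> simp_all [h, h.symm]
  have h1 := E.countablyAdditive f hpair ψ
  have hunion : (⋃ n, f n) = S ∪ T := by
    apply Set.Subset.antisymm
    · intro x hx
      simp only [Set.mem_iUnion] at hx
      obtain ⟨n, hn⟩ := hx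
      by_cases h0 : n = 0
      · subst h0; simp [hf] at hn; exact Or.inl hn
      by_cases h1 : n = 1
      · subst h1; simp [hf] at hn; exact Or.inr hn
      · simp [hf, h0, h1] at hn
    · intro x hx
      cases hx with
      | inl hx => exact Set.mem_iUnion.mpr ⟨0, by simp [hf, hx]⟩
      | inr hx => exact Set.mem_iUnion.mpr ⟨1, by simp [hf, hx]⟩
  rw [hunion] at h1
  have h2 : HasSum (fun n => E.proj (f n) ψ) (∑ n ∈ Finset.range 2, E.proj (f n) ψ) := by
    apply hasSum_sum_of_ne_finset_zero
    intro n hn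
    simp only [Finset.mem_range, not_lt] at hn
    have h0 : n ≠ 0 := by omega
    have h1 : n ≠ 1 := by omega
    simp [hf, h0, h1, E.empty]
  rw [h1.unique h2]
  simp [hf, Finset.sum_range_succ]

lemma PVM.finsum {ι : Type*} (s : Finset ι) (f : ι → Set ℝ)
    (h : ∀ i ∈ s, ∀ j ∈ s, i ≠ j → Disjoint (f i) (f j)) (ψ : H) :
    (∑ i ∈ s, E.proj (f i) ψ) = E.proj (⋃ i ∈ s, f i) ψ := by
  classical
  induction s using Finset.induction with
  | empty => simp [E.empty]
  | @insert a s' hna ih =>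
    rw [Finset.sum_insert hna]
    have hd : Disjoint (f a) (⋃ i ∈ s', f i) := by
      rw [Set.disjoint_iUnion_right]
      intro i
      rw [Set.disjoint_iUnion_right]
      intro hi
      exact h a (Finset.mem_insert_self a s') i (Finset.mem_insert_of_mem hi)
        (by rintro rfl; exact hna hi)
    rw [ih (fun i hi j hj hij => h i (Finset.mem_insert_of_mem hi) j (Finset.mem_insert_of_mem hj) hij)]
    rw [← E.add _ _ hd ψ]
    congr 1
    simp [Set.biUnion_insert]

lemma pyth {ι : Type*} (s : Finset ι) (v : ι → H)
    (h : ∀ i ∈ s, ∀ j ∈ s, i ≠ j → ⟪v i, v j⟫ = 0) :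
    ‖∑ i ∈ s, v i‖ ^ 2 = ∑ i ∈ s, ‖v i‖ ^ 2 := by
  have key : ⟪∑ i ∈ s, v i, ∑ j ∈ s, v j⟫ = ∑ i ∈ s, ⟪v i, v i⟫ := by
    rw [sum_inner]
    apply Finset.sum_congr rfl
    intro i hi
    rw [inner_sum]
    exact Finset.sum_eq_single i (fun j hj hji => h i hi j hj (Ne.symm hji)) (by tauto)
  have := congrArg RCLike.re key
  rw [inner_self_eq_norm_sq] at this
  rw [this, map_sum]
  exact Finset.sum_congr rfl fun i _ => inner_self_eq_norm_sq (v i)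

/-- Key estimate: a sum of "shifted blocks" of a unitary has norm at most `1`. -/
lemma band_bound {ι : Type*} (U : H →L[ℂ] H) (hU : U ∈ unitary (H →L[ℂ] H))
    (s : Finset ι) (t g : ι → Set ℝ)
    (ht : ∀ i ∈ s, ∀ j ∈ s, i ≠ j → Disjoint (t i) (t j))
    (hg : ∀ i ∈ s, ∀ j ∈ s, i ≠ j → Disjoint (g i) (g j)) (ψ : H) :
    ‖∑ j ∈ s, E.proj (t j) (U (E.proj (g j) ψ))‖ ≤ ‖ψ‖ := by
  have h1 : ‖∑ j ∈ s, E.proj (t j) (U (E.proj (g j) ψ))‖ ^ 2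
      = ∑ j ∈ s, ‖E.proj (t j) (U (E.proj (g j) ψ))‖ ^ 2 := by
    apply pyth
    intro i hi j hj hij
    rw [E.inner_left, E.disj _ _ (ht i hi j hj hij), inner_zero_right]
  have h2 : ∀ j ∈ s, ‖E.proj (t j) (U (E.proj (g j) ψ))‖ ^ 2 ≤ ‖E.proj (g j) ψ‖ ^ 2 := by
    intro j _
    have := (E.norm_le (t j) (U (E.proj (g j) ψ))).trans
      (le_of_eq (U.norm_map_of_mem_unitary hU _))
    nlinarith [norm_nonneg (E.proj (t j) (U (E.proj (g j) ψ))), norm_nonneg (E.proj (g j) ψ)]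
  have h3 : ∑ j ∈ s, ‖E.proj (g j) ψ‖ ^ 2 = ‖∑ j ∈ s, E.proj (g j) ψ‖ ^ 2 := by
    refine (pyth s _ ?_).symm
    intro i hi j hj hij
    rw [E.inner_left, E.disj _ _ (hg i hi j hj hij), inner_zero_right]
  have h4 : ‖∑ j ∈ s, E.proj (g j) ψ‖ ≤ ‖ψ‖ := by
    rw [E.finsum s g hg ψ]
    exact E.norm_le _ ψ
  have h5 := Finset.sum_le_sum h2
  nlinarith [norm_nonneg (∑ j ∈ s, E.proj (t j) (U (E.proj (g j) ψ))), norm_nonneg ψ,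
    norm_nonneg (∑ j ∈ s, E.proj (g j) ψ)]

/-- The `i`-th spectral band: `[(i-1)b, ib)` for `1 ≤ i ≤ N`, and `[Nb, ∞)` for `i = N+1`. -/
def bSet (b : ℝ) (N i : ℕ) : Set ℝ :=
  if i = N + 1 then Set.Ici ((N : ℝ) * b) else Set.Ico (((i : ℝ) - 1) * b) ((i : ℝ) * b)

lemma bSet_disjoint {b : ℝ} (hb : 0 < b) (N : ℕ) {i j : ℕ} (hi : i ≤ N + 1) (hj : j ≤ N + 1)
    (hij : i ≠ j) : Disjoint (bSet b N i) (bSet b N j) := by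
  have key : ∀ k l : ℕ, k < l → l ≤ N + 1 → Disjoint (bSet b N k) (bSet b N l) := by
    intro k l hkl hl
    have hk : k ≠ N + 1 := by omega
    have hkl' : (k : ℝ) ≤ (l : ℝ) - 1 := by
      have : (k : ℝ) + 1 ≤ l := by exact_mod_cast hkl
      linarith
    by_cases hlN : l = N + 1
    · subst hlN
      simp only [bSet, hk, if_neg, if_pos rfl, reduceIte]
      apply Set.disjoint_left.mpr
      intro x hx hx2
      simp only [Set.mem_Ico] at hx
      simp only [Set.mem_Ici] at hx2
      have hkN : (k : ℝ) ≤ (N : ℝ) := by exact_mod_cast Nat.lt_succ_iff.mp hkl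
      nlinarith
    · simp only [bSet, hk, hlN, reduceIte]
      apply Set.disjoint_left.mpr
      intro x hx hx2
      simp only [Set.mem_Ico] at hx hx2
      nlinarith
  rcases lt_or_gt_of_ne hij with h | h
  · exact key i j h hj
  · exact (key j i h hi).symm

lemma bSet_union {b : ℝ} (hb : 0 < b) (N : ℕ) :
    (⋃ i ∈ Finset.Icc 1 (N + 1), bSet b N i) = Set.Ici 0 := by
  apply Set.Subset.antisymm
  · intro x hx
    simp only [Set.mem_iUnion] at hx
    obtain ⟨i, hi, hx⟩ := hx
    simp only [Finset.mem_Icc] at hi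
    simp only [Set.mem_Ici]
    by_cases h : i = N + 1
    · subst h
      simp only [bSet, if_pos rfl] at hx
      have : (0 : ℝ) ≤ (N : ℝ) * b := by positivity
      exact le_trans this hx
    · simp only [bSet, h, reduceIte, Set.mem_Ico] at hx
      have h1 : (1 : ℝ) ≤ (i : ℝ) := by exact_mod_cast hi.1
      nlinarith [hx.1]
  · intro x hx
    simp only [Set.mem_Ici] at hx
    by_cases h : (N : ℝ) * b ≤ x
    · refine Set.mem_iUnion.mpr ⟨N + 1, ?_⟩
      refine Set.mem_iUnion.mpr ⟨by simp, ?_⟩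
      simp only [bSet, if_pos rfl, Set.mem_Ici]
      exact h
    · push_neg at h
      set k := ⌊x / b⌋₊ with hk
      have hxb : 0 ≤ x / b := by positivity
      have hkN : k < N := by
        rw [hk, Nat.floor_lt hxb]
        rw [div_lt_iff₀ hb]
        exact h
      refine Set.mem_iUnion.mpr ⟨k + 1, ?_⟩
      refine Set.mem_iUnion.mpr ⟨by simp; omega, ?_⟩
      have hne : k + 1 ≠ N + 1 := by omega
      simp only [bSet, hne, reduceIte, Set.mem_Ico]
      push_cast
      constructor
      · have := Nat.floor_le hxb
        rw [← hk] at this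
        calc ((k : ℝ) + 1 - 1) * b = k * b := by ring
          _ ≤ (x / b) * b := by nlinarith [this]
          _ = x := by field_simp
      · have := Nat.lt_floor_add_one (x / b)
        rw [← hk] at this
        calc x = (x / b) * b := by field_simp
          _ < ((k : ℝ) + 1) * b := by nlinarith [this]

lemma expLamN_eq (c b : ℝ) (N : ℕ) :
    expLamN E c b N = ∑ i ∈ Finset.Icc 1 (N + 1),
      Real.exp (c * (min i N : ℕ) * b) • E.proj (bSet b N i) := by
  rw [Finset.sum_Icc_succ_top (by omega : 1 ≤ N + 1)]
  unfold expLamN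
  congr 1
  · apply Finset.sum_congr rfl
    intro i hi
    simp only [Finset.mem_Icc] at hi
    have h1 : min i N = i := min_eq_left hi.2
    have h2 : i ≠ N + 1 := by omega
    rw [h1]
    simp [bSet, h2]
  · have h1 : min (N + 1) N = N := min_eq_right (by omega)
    rw [h1]
    simp [bSet]

end Aux

section Van
variable {H : Type*} [NormedAddCommGroup H] [InnerProductSpace ℂ H] [CompleteSpace H]

lemma vanish (U : H →L[ℂ] H) (E : PVM ℝ H) {b : ℝ} (hb : 0 < b)
    (hprop : FinitePropagation U E b) (N : ℕ) {i j : ℕ}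
    (hi1 : 1 ≤ i) (hi : i ≤ N + 1) (hj1 : 1 ≤ j) (hj : j ≤ N + 1)
    (hfar : i + 2 ≤ j ∨ j + 2 ≤ i) (ψ : H) :
    E.proj (bSet b N i) (U (E.proj (bSet b N j) ψ)) = 0 := by
  by_cases hjN : j = N + 1
  -- tail case: j = N + 1, so i + 2 ≤ j, i.e. i ≤ N - 1
  · subst hjN
    have hiN : i + 2 ≤ N + 1 := by omega
    set φ := E.proj (bSet b N (N + 1)) ψ with hφ
    have hφfix : E.proj (Set.Ici ((N : ℝ) * b)) φ = φ := by
      rw [hφ]; simp only [bSet, if_pos rfl]; exact E.idem _ ψ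
    set g : ℕ → Set ℝ := fun k => Set.Ico (((N : ℝ) + k) * b) (((N : ℝ) + k + 1) * b) with hg
    have hpair : Pairwise fun m n => Disjoint (g m) (g n) := by
      intro m n hmn
      have key : ∀ p q : ℕ, p < q → Disjoint (g p) (g q) := by
        intro p q hpq
        apply Set.disjoint_left.mpr
        intro x hx hx2
        simp only [hg, Set.mem_Ico] at hx hx2
        have : (p : ℝ) + 1 ≤ (q : ℝ) := by exact_mod_cast hpq
        nlinarith [hx.2, hx2.1]
      rcases lt_or_gt_of_ne hmn with h | h
      · exact key m n h
      · exact (key n m h).symm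
    have hunion : (⋃ k, g k) = Set.Ici ((N : ℝ) * b) := by
      apply Set.Subset.antisymm
      · intro x hx
        simp only [Set.mem_iUnion, hg, Set.mem_Ico] at hx
        obtain ⟨k, hk1, _⟩ := hx
        simp only [Set.mem_Ici]
        nlinarith [hk1, (Nat.cast_nonneg k : (0:ℝ) ≤ k)]
      · intro x hx
        simp only [Set.mem_Ici] at hx
        set k := ⌊(x - (N : ℝ) * b) / b⌋₊ with hk
        have hnn : 0 ≤ (x - (N : ℝ) * b) / b := by
          apply div_nonneg (by linarith) hb.le
        refine Set.mem_iUnion.mpr ⟨k, ?_⟩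
        simp only [hg, Set.mem_Ico]
        have h1 := Nat.floor_le hnn
        have h2 := Nat.lt_floor_add_one ((x - (N : ℝ) * b) / b)
        rw [← hk] at h1 h2
        rw [le_div_iff₀ hb] at h1
        rw [div_lt_iff₀ hb] at h2
        constructor <;> nlinarith
    have hsum := E.countablyAdditive g hpair φ
    rw [hunion, hφfix] at hsum
    have hsum2 := ((E.proj (bSet b N i)).comp U).hasSum hsum
    have hzero : ∀ k : ℕ, ((E.proj (bSet b N i)).comp U) (E.proj (g k) φ) = 0 := by
      intro k
      have hfix : E.proj (Set.Ico (((N : ℝ) + k) * b) (((N : ℝ) + k + 1) * b))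
          (E.proj (g k) φ) = E.proj (g k) φ := E.idem _ φ
      have hlt : ((N : ℝ) + k) * b < ((N : ℝ) + k + 1) * b := by nlinarith
      have hJ := hprop _ _ hlt _ hfix
      simp only [ContinuousLinearMap.comp_apply]
      rw [← hJ]
      apply E.disj
      apply Set.disjoint_left.mpr
      intro x hx hx2
      have hiNe : i ≠ N + 1 := by omega
      simp only [bSet, hiNe, reduceIte, Set.mem_Ico] at hx
      simp only [Set.mem_Ico] at hx2
      have hcast : (i : ℝ) + 1 ≤ (N : ℝ) := by exact_mod_cast (by omega : i + 1 ≤ N)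
      have hknn : (0 : ℝ) ≤ (k : ℝ) := Nat.cast_nonneg k
      nlinarith [hx.1, hx.2, hx2.1]
    have : (fun k => ((E.proj (bSet b N i)).comp U) (E.proj (g k) φ)) = fun _ => (0 : H) :=
      funext hzero
    rw [this] at hsum2
    have := hsum2.unique hasSum_zero
    simpa using this
  -- bounded case: j ≤ N
  · have hjN' : j ≤ N := by omega
    set φ := E.proj (bSet b N j) ψ with hφ
    have hφfix : E.proj (Set.Ico (((j : ℝ) - 1) * b) ((j : ℝ) * b)) φ = φ := by
      rw [hφ]; simp only [bSet, hjN, reduceIte]; exact E.idem _ ψ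
    have hlt : ((j : ℝ) - 1) * b < (j : ℝ) * b := by nlinarith
    have hJ := hprop _ _ hlt _ hφfix
    rw [← hJ]
    apply E.disj
    apply Set.disjoint_left.mpr
    intro x hx hx2
    simp only [Set.mem_Ico] at hx2
    rcases hfar with hf | hf
    -- i + 2 ≤ j : band i is far below
    · have hiNe : i ≠ N + 1 := by omega
      simp only [bSet, hiNe, reduceIte, Set.mem_Ico] at hx
      have hcast : (i : ℝ) + 2 ≤ (j : ℝ) := by exact_mod_cast hf
      nlinarith [hx.2, hx2.1]
    -- j + 2 ≤ i : band i is far above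
    · by_cases hiNe : i = N + 1
      · subst hiNe
        simp only [bSet, if_pos rfl, if_true, Set.mem_Ici] at hx
        have hcast : (j : ℝ) + 1 ≤ (N : ℝ) := by exact_mod_cast (by omega : j + 1 ≤ N)
        nlinarith [hx2.2]
      · simp only [bSet, hiNe, reduceIte, Set.mem_Ico] at hx
        have hcast : (j : ℝ) + 2 ≤ (i : ℝ) := by exact_mod_cast hf
        nlinarith [hx.1, hx2.2]

end Van

/-- `‖[U, e^{Λ_N(A)}] e^{-Λ_N(A)}‖ ≤ 2 sinh(δb)`, uniformly in `N`. -/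
theorem stmt3 {H : Type*} [NormedAddCommGroup H] [InnerProductSpace ℂ H] [CompleteSpace H]
    (U : H →L[ℂ] H) (hU : U ∈ unitary (H →L[ℂ] H))
    (E : PVM ℝ H) (hpos : E.proj (Set.Iio 0) = 0)
    (b : ℝ) (hb : 0 < b) (hprop : FinitePropagation U E b)
    (δ : ℝ) (hδ : 0 < δ) (N : ℕ) :
    ‖(U ∘L expLamN E δ b N - expLamN E δ b N ∘L U) ∘L expLamN E (-δ) b N‖ ≤
      2 * Real.sinh (δ * b) := by
  classical
  set I := Finset.Icc 1 (N + 1) with hI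
  set w : ℝ → ℕ → ℝ := fun c i => Real.exp (c * (min i N : ℕ) * b) with hw
  have hIci : ∀ x : H, E.proj (Set.Ici 0) x = x := by
    intro x
    have h1 := E.add (Set.Iio 0) (Set.Ici 0) (Set.Iio_disjoint_Ici le_rfl) x
    rw [Set.Iio_union_Ici, E.univ, hpos] at h1
    simpa using h1.symm
  have hdisj : ∀ i ∈ I, ∀ j ∈ I, i ≠ j → Disjoint (bSet b N i) (bSet b N j) := by
    intro i hi j hj hij
    simp only [hI, Finset.mem_Icc] at hi hj
    exact bSet_disjoint hb N hi.2 hj.2 hij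
  have hone : ∀ x : H, (∑ i ∈ I, E.proj (bSet b N i) x) = x := by
    intro x
    rw [E.finsum I _ hdisj x, hI, bSet_union hb N]
    exact hIci x
  have hexp : ∀ c : ℝ, ∀ x : H,
      expLamN E c b N x = ∑ i ∈ I, w c i • E.proj (bSet b N i) x := by
    intro c x
    rw [expLamN_eq E c b N]
    simp [ContinuousLinearMap.sum_apply, ContinuousLinearMap.smul_apply, hw, hI]
  have hPP : ∀ c : ℝ, ∀ x : H, ∀ i ∈ I,
      E.proj (bSet b N i) (∑ j ∈ I, w c j • E.proj (bSet b N j) x)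
        = w c i • E.proj (bSet b N i) x := by
    intro c x i hi
    rw [map_sum]
    rw [Finset.sum_eq_single i
      (fun j hj hji => by
        rw [ContinuousLinearMap.map_smul_of_tower, E.disj _ _ (hdisj i hi j hj (Ne.symm hji)), smul_zero])
      (fun h => absurd hi h)]
    rw [ContinuousLinearMap.map_smul_of_tower, E.idem]
  have hmul : ∀ i, w δ i * w (-δ) i = 1 := by
    intro i
    rw [hw]
    simp only [← Real.exp_add]
    rw [← Real.exp_zero]
    congr 1
    ring
  -- the key pointwise identity
  have key : ∀ ψ : H,
      ((U ∘L expLamN E δ b N - expLamN E δ b N ∘L U) ∘L expLamN E (-δ) b N) ψ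
        = (1 - Real.exp (δ * b)) •
            (∑ j ∈ Finset.Icc 1 (N - 1), E.proj (bSet b N (j + 1)) (U (E.proj (bSet b N j) ψ)))
          + (1 - Real.exp (-(δ * b))) •
            (∑ j ∈ Finset.Icc 2 N, E.proj (bSet b N (j - 1)) (U (E.proj (bSet b N j) ψ))) := by
    intro ψ
    simp only [ContinuousLinearMap.comp_apply, ContinuousLinearMap.sub_apply]
    have e1 : expLamN E δ b N (expLamN E (-δ) b N ψ) = ψ := by
      rw [hexp (-δ) ψ, hexp δ]
      rw [Finset.sum_congr rfl (fun i hi => by rw [hPP (-δ) ψ i hi])]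
      rw [Finset.sum_congr rfl
        (fun i _ => by rw [smul_smul, hmul i, one_smul] :
          ∀ i ∈ I, w δ i • w (-δ) i • E.proj (bSet b N i) ψ = E.proj (bSet b N i) ψ)]
      exact hone ψ
    have e2 : U (expLamN E (-δ) b N ψ) = ∑ j ∈ I, w (-δ) j • U (E.proj (bSet b N j) ψ) := by
      rw [hexp (-δ) ψ, map_sum]
      exact Finset.sum_congr rfl fun j _ => ContinuousLinearMap.map_smul_of_tower U _ _
    have e3 : expLamN E δ b N (U (expLamN E (-δ) b N ψ))
        = ∑ i ∈ I, ∑ j ∈ I, (w δ i * w (-δ) j) • E.proj (bSet b N i) (U (E.proj (bSet b N j) ψ)) := by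
      rw [e2, hexp δ]
      apply Finset.sum_congr rfl
      intro i _
      rw [map_sum, Finset.smul_sum]
      apply Finset.sum_congr rfl
      intro j _
      rw [ContinuousLinearMap.map_smul_of_tower, smul_smul]
    have e4 : U ψ = ∑ i ∈ I, ∑ j ∈ I, E.proj (bSet b N i) (U (E.proj (bSet b N j) ψ)) := by
      conv_lhs => rw [← hone ψ, map_sum]
      rw [Finset.sum_congr rfl (fun j _ => (hone (U (E.proj (bSet b N j) ψ))).symm)]
      exact Finset.sum_comm
    rw [e1, e3, e4, ← Finset.sum_sub_distrib]
    have e5 : ∀ i ∈ I,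
        ((∑ j ∈ I, E.proj (bSet b N i) (U (E.proj (bSet b N j) ψ)))
          - ∑ j ∈ I, (w δ i * w (-δ) j) • E.proj (bSet b N i) (U (E.proj (bSet b N j) ψ)))
        = ∑ j ∈ I, (1 - w δ i * w (-δ) j) • E.proj (bSet b N i) (U (E.proj (bSet b N j) ψ)) := by
      intro i _
      rw [← Finset.sum_sub_distrib]
      exact Finset.sum_congr rfl fun j _ => by rw [sub_smul, one_smul]
    rw [Finset.sum_congr rfl e5]
    -- now reindex over the product and restrict to the two bands
    set F : ℕ × ℕ → H :=
      fun p => (1 - w δ p.1 * w (-δ) p.2) •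
        E.proj (bSet b N p.1) (U (E.proj (bSet b N p.2) ψ)) with hF
    have e6 : (∑ i ∈ I, ∑ j ∈ I, (1 - w δ i * w (-δ) j) •
        E.proj (bSet b N i) (U (E.proj (bSet b N j) ψ))) = ∑ p ∈ I ×ˢ I, F p := by
      rw [Finset.sum_product]
    rw [e6]
    set B1 : Finset (ℕ × ℕ) := (Finset.Icc 1 (N - 1)).image (fun j => (j + 1, j)) with hB1
    set B2 : Finset (ℕ × ℕ) := (Finset.Icc 2 N).image (fun j => (j - 1, j)) with hB2
    have hsubset : B1 ∪ B2 ⊆ I ×ˢ I := by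
      intro p hp
      simp only [hB1, hB2, Finset.mem_union, Finset.mem_image, Finset.mem_Icc] at hp
      simp only [Finset.mem_product, hI, Finset.mem_Icc]
      rcases hp with ⟨a, ha, rfl⟩ | ⟨a, ha, rfl⟩ <;> constructor <;> constructor <;> omega
    have hvan : ∀ p ∈ I ×ˢ I, p ∉ B1 ∪ B2 → F p = 0 := by
      rintro ⟨i, j⟩ hp hnot
      simp only [Finset.mem_product, hI, Finset.mem_Icc] at hp
      have hmem1 : (i, j) ∉ B1 := fun h => hnot (Finset.mem_union_left _ h)
      have hmem2 : (i, j) ∉ B2 := fun h => hnot (Finset.mem_union_right _ h)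
      have h1' : ¬(1 ≤ j ∧ j + 1 ≤ N ∧ i = j + 1) := by
        rintro ⟨ha, hb2, rfl⟩
        exact hmem1 (Finset.mem_image.mpr ⟨j, Finset.mem_Icc.mpr ⟨ha, by omega⟩, rfl⟩)
      have h2' : ¬(2 ≤ j ∧ j ≤ N ∧ i = j - 1) := by
        rintro ⟨ha, hb2, rfl⟩
        exact hmem2 (Finset.mem_image.mpr ⟨j, Finset.mem_Icc.mpr ⟨ha, hb2⟩, rfl⟩)
      by_cases hmin : min i N = min j N
      · have hc : w δ i * w (-δ) j = 1 := by
          rw [hw]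
          simp only [← Real.exp_add]
          rw [← Real.exp_zero]
          congr 1
          rw [hmin]
          ring
        simp only [hF, hc, sub_self, zero_smul]
      · have hfar : i + 2 ≤ j ∨ j + 2 ≤ i := by omega
        rw [hF]
        simp only
        rw [vanish U E hb hprop N hp.1.1 hp.1.2 hp.2.1 hp.2.2 hfar ψ, smul_zero]
    rw [← Finset.sum_subset hsubset hvan]
    have hB12 : Disjoint B1 B2 := by
      rw [Finset.disjoint_left]
      rintro p hp1 hp2
      simp only [hB1, hB2, Finset.mem_image, Finset.mem_Icc] at hp1 hp2
      obtain ⟨a, ha, rfl⟩ := hp1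
      obtain ⟨c, hc, hcc⟩ := hp2
      have : c - 1 = a + 1 ∧ c = a := by
        constructor
        · exact congrArg Prod.fst hcc
        · exact congrArg Prod.snd hcc
      omega
    rw [Finset.sum_union hB12]
    rw [Finset.sum_image (fun a _ c _ h => by simpa using (congrArg Prod.snd h) : ∀ a ∈ Finset.Icc 1 (N-1), ∀ c ∈ Finset.Icc 1 (N-1), (a+1, a) = (c+1, c) → a = c)]
    rw [Finset.sum_image (fun a _ c _ h => by simpa using (congrArg Prod.snd h) : ∀ a ∈ Finset.Icc 2 N, ∀ c ∈ Finset.Icc 2 N, (a-1, a) = (c-1, c) → a = c)]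
    rw [Finset.smul_sum, Finset.smul_sum]
    congr 1
    · apply Finset.sum_congr rfl
      intro j hj
      simp only [Finset.mem_Icc] at hj
      have hj1 : min (j + 1) N = j + 1 := min_eq_left (by omega)
      have hj2 : min j N = j := min_eq_left (by omega)
      simp only [hF, hw, hj1, hj2]
      congr 2
      simp only [← Real.exp_add]
      congr 1
      push_cast
      ring
    · apply Finset.sum_congr rfl
      intro j hj
      simp only [Finset.mem_Icc] at hj
      have hj1 : min (j - 1) N = j - 1 := min_eq_left (by omega)
      have hj2 : min j N = j := min_eq_left hj.2
      simp only [hF, hw, hj1, hj2]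
      congr 2
      simp only [← Real.exp_add]
      congr 1
      have : ((j - 1 : ℕ) : ℝ) = (j : ℝ) - 1 := by
        have : (1 : ℕ) ≤ j := by omega
        push_cast [this]
        ring
      rw [this]
      ring
  -- Now the norm estimate
  have hsinh : 0 ≤ 2 * Real.sinh (δ * b) := by
    have : 0 ≤ Real.sinh (δ * b) := Real.sinh_nonneg_iff.mpr (by positivity)
    linarith
  apply ContinuousLinearMap.opNorm_le_bound _ hsinh
  intro ψ
  rw [key ψ]
  have hb1 : ‖∑ j ∈ Finset.Icc 1 (N - 1), E.proj (bSet b N (j + 1)) (U (E.proj (bSet b N j) ψ))‖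
      ≤ ‖ψ‖ := by
    apply band_bound E U hU
    · intro i hi j hj hij
      simp only [Finset.mem_Icc] at hi hj
      exact bSet_disjoint hb N (by omega) (by omega) (by omega)
    · intro i hi j hj hij
      simp only [Finset.mem_Icc] at hi hj
      exact bSet_disjoint hb N (by omega) (by omega) hij
  have hb2 : ‖∑ j ∈ Finset.Icc 2 N, E.proj (bSet b N (j - 1)) (U (E.proj (bSet b N j) ψ))‖
      ≤ ‖ψ‖ := by
    apply band_bound E U hU
    · intro i hi j hj hij
      simp only [Finset.mem_Icc] at hi hj
      exact bSet_disjoint hb N (by omega) (by omega) (by omega)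
    · intro i hi j hj hij
      simp only [Finset.mem_Icc] at hi hj
      exact bSet_disjoint hb N (by omega) (by omega) hij
  have habs1 : |1 - Real.exp (δ * b)| = Real.exp (δ * b) - 1 := by
    rw [abs_of_nonpos (by nlinarith [Real.one_le_exp (by positivity : (0:ℝ) ≤ δ * b)])]
    ring
  have habs2 : |1 - Real.exp (-(δ * b))| = 1 - Real.exp (-(δ * b)) := by
    apply abs_of_nonneg
    nlinarith [Real.exp_le_one_iff.mpr (by nlinarith : -(δ * b) ≤ 0)]
  calc ‖(1 - Real.exp (δ * b)) •
          (∑ j ∈ Finset.Icc 1 (N - 1), E.proj (bSet b N (j + 1)) (U (E.proj (bSet b N j) ψ)))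
        + (1 - Real.exp (-(δ * b))) •
          (∑ j ∈ Finset.Icc 2 N, E.proj (bSet b N (j - 1)) (U (E.proj (bSet b N j) ψ)))‖
      ≤ ‖(1 - Real.exp (δ * b)) •
          (∑ j ∈ Finset.Icc 1 (N - 1), E.proj (bSet b N (j + 1)) (U (E.proj (bSet b N j) ψ)))‖
        + ‖(1 - Real.exp (-(δ * b))) •
          (∑ j ∈ Finset.Icc 2 N, E.proj (bSet b N (j - 1)) (U (E.proj (bSet b N j) ψ)))‖ :=
        norm_add_le _ _
    _ ≤ (Real.exp (δ * b) - 1) * ‖ψ‖ + (1 - Real.exp (-(δ * b))) * ‖ψ‖ := by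
        rw [norm_smul, norm_smul, Real.norm_eq_abs, Real.norm_eq_abs, habs1, habs2]
        have h1 : (0:ℝ) ≤ Real.exp (δ * b) - 1 := by
          nlinarith [Real.one_le_exp (by positivity : (0:ℝ) ≤ δ * b)]
        have h2 : (0:ℝ) ≤ 1 - Real.exp (-(δ * b)) := by
          nlinarith [Real.exp_le_one_iff.mpr (by nlinarith : -(δ * b) ≤ 0)]
        gcongr
    _ = 2 * Real.sinh (δ * b) * ‖ψ‖ := by
        rw [Real.sinh_eq]
        ring
end
end
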